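/- arXiv:math/0305335 — 2 statements merged into one kernel-verified Lean document; each statement's English description precedes it below -/
import Mathlib

section
/- Let V be a steplike potential with steps V₊, V₋ and threshold x_M. Let z ∈ ℝ with z > V₊ and z > V₋, and set r₊ = √(z − V₊) > 0 and r₋ = √(z − V₋) > 0. Suppose u is a solution of −u'' + V u = z u and there are constants T₋, R₋ ∈ ℂ with u(x) = T₋ e^{−i r₋ x} for all x ≤ −x_M and u(x) = e^{−i r₊ x} + R₋ e^{i r₊ x} for all x ≥ x_M. Then r₋ |T₋|² + r₊ |R₋|² = r₊. -/
/-!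
The Wronskian `W(u, ū) = u ū' - u' ū` of a solution and its complex conjugate (again a solution,
as `V` and `z` are real) is constant: it is absolutely continuous, and almost everywhere its
derivative is `u (V - z) ū - (V - z) u ū = 0`. Where `u = A e^{icx} + B e^{-icx}` one computes
`W = 2ic (|B|² - |A|²)`, so comparing `2i r₋ |T₋|²` on the left with `2i r₊ (1 - |R₋|²)` on the
right gives the identity.
-/

open Complex MeasureTheory
open scoped Classical

/-- `u` is a solution of `-u'' + V u = z u`: `u` is differentiable with continuous
derivative, and the derivative satisfies the integrated form of the ODE. -/
def IsSolution (V : ℝ → ℝ) (z : ℂ) (u : ℝ → ℂ) : Prop :=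
  Differentiable ℝ u ∧ Continuous (deriv u) ∧
    ∀ x : ℝ, deriv u x = deriv u 0 + ∫ t in (0:ℝ)..x, ((V t : ℂ) - z) * u t

open Set Filter Topology ComplexConjugate

noncomputable def wronskian (f g : ℝ → ℂ) (x : ℝ) : ℂ := f x * deriv g x - deriv f x * g x

theorem deriv_conj (u : ℝ → ℂ) : (deriv fun y => conj (u y)) = fun x => conj (deriv u x) :=
  deriv.star'

theorem isSolution_conj {V : ℝ → ℝ} {z : ℂ} {u : ℝ → ℂ} (hu : IsSolution V z u) :
    IsSolution V (conj z) fun x => conj (u x) := by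
  obtain ⟨hd, hc, hode⟩ := hu
  refine ⟨hd.star, ?_, fun x => ?_⟩
  · rw [deriv_conj]
    exact continuous_conj.comp hc
  · simp only [deriv_conj, hode x, map_add, ← intervalIntegral.intervalIntegral_conj, map_mul,
      map_sub, conj_ofReal]

namespace IsSolution

variable {V : ℝ → ℝ} {z : ℂ} {u u₁ u₂ : ℝ → ℂ}

theorem contDiff (hu : IsSolution V z u) : ContDiff ℝ 1 u :=
  contDiff_one_iff_deriv.2 ⟨hu.1, hu.2.1⟩

theorem locallyIntegrable_potential_mul (hu : IsSolution V z u) (hV : LocallyIntegrable V) :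
    LocallyIntegrable fun t => ((V t : ℂ) - z) * u t := by
  have hVc : LocallyIntegrable fun t => (V t : ℂ) :=
    hV.mono (continuous_ofReal.comp_aestronglyMeasurable hV.aestronglyMeasurable) (by simp)
  exact (hVc.sub (locallyIntegrable_const z)).mul_continuous hu.1.continuous

theorem ae_hasDerivAt_deriv (hu : IsSolution V z u) (hV : LocallyIntegrable V) :
    ∀ᵐ x, HasDerivAt (deriv u) (((V x : ℂ) - z) * u x) x := by
  filter_upwards [_root_.LocallyIntegrable.ae_hasDerivAt_integral
    (hu.locallyIntegrable_potential_mul hV)] with x hx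
  rw [show deriv u = fun y => deriv u 0 + ∫ t in (0:ℝ)..y, ((V t : ℂ) - z) * u t from
    funext hu.2.2]
  exact (hx 0).const_add _

theorem lipschitzOnWith_deriv (hu : IsSolution V z u) (hV : LocallyIntegrable V) {C : ℝ}
    (hVC : ∀ x, |V x| ≤ C) (a b : ℝ) : ∃ K, LipschitzOnWith K (deriv u) (uIcc a b) := by
  set g : ℝ → ℂ := fun t => ((V t : ℂ) - z) * u t
  obtain ⟨M, hM⟩ := isCompact_uIcc.exists_bound_of_continuousOn hu.1.continuous.continuousOn
  have hg : ∀ t ∈ uIcc a b, ‖g t‖ ≤ (C + ‖z‖) * M := fun t ht => by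
    refine norm_mul_le_of_le ((norm_sub_le _ _).trans ?_) (hM t ht)
    simpa using hVC t
  have hint : ∀ x y, IntervalIntegrable g volume x y := fun x y =>
    ((hu.locallyIntegrable_potential_mul hV).integrableOn_isCompact
      isCompact_uIcc).intervalIntegrable
  refine ⟨Real.toNNReal ((C + ‖z‖) * M), LipschitzOnWith.of_dist_le_mul fun x hx y hy => ?_⟩
  rw [dist_eq_norm, hu.2.2 x, hu.2.2 y, add_sub_add_left_eq_sub,
    intervalIntegral.integral_interval_sub_left (hint 0 x) (hint 0 y), Real.dist_eq]
  calc ‖∫ t in y..x, g t‖ ≤ (C + ‖z‖) * M * |x - y| :=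
        intervalIntegral.norm_integral_le_of_norm_le_const fun t ht =>
          hg t (uIcc_subset_uIcc hy hx (uIoc_subset_uIcc ht))
    _ ≤ Real.toNNReal ((C + ‖z‖) * M) * |x - y| := by gcongr; exact Real.le_coe_toNNReal _

theorem absolutelyContinuousOnInterval_wronskian (hu₁ : IsSolution V z u₁)
    (hu₂ : IsSolution V z u₂) (hV : LocallyIntegrable V) {C : ℝ} (hVC : ∀ x, |V x| ≤ C)
    (a b : ℝ) : AbsolutelyContinuousOnInterval (wronskian u₁ u₂) a b := by
  obtain ⟨K₁, hK₁⟩ := hu₁.lipschitzOnWith_deriv hV hVC a b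
  obtain ⟨K₂, hK₂⟩ := hu₂.lipschitzOnWith_deriv hV hVC a b
  exact ((hu₁.contDiff.contDiffOn.absolutelyContinuousOnInterval).smul
    hK₂.absolutelyContinuousOnInterval).sub
    (hK₁.absolutelyContinuousOnInterval.smul
      hu₂.contDiff.contDiffOn.absolutelyContinuousOnInterval)

theorem wronskian_eq (hu₁ : IsSolution V z u₁) (hu₂ : IsSolution V z u₂)
    (hV : LocallyIntegrable V) {C : ℝ} (hVC : ∀ x, |V x| ≤ C) (a b : ℝ) :
    wronskian u₁ u₂ a = wronskian u₁ u₂ b := by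
  have hW : ∀ᵐ x, x ∈ uIcc a b → HasDerivAt (wronskian u₁ u₂) 0 x := by
    filter_upwards [hu₁.ae_hasDerivAt_deriv hV, hu₂.ae_hasDerivAt_deriv hV] with x h₁ h₂ _
    exact (((hu₁.1 x).hasDerivAt.mul h₂).sub (h₁.mul (hu₂.1 x).hasDerivAt)).congr_deriv (by ring)
  obtain ⟨c, hc⟩ :=
    (hu₁.absolutelyContinuousOnInterval_wronskian hu₂ hV hVC a b).const_of_ae_hasDerivAt_zero hW
  rw [hc a left_mem_uIcc, hc b right_mem_uIcc]

end IsSolution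

theorem wronskian_conj_of_eventuallyEq {u : ℝ → ℂ} {x c : ℝ} {A B : ℂ}
    (h : u =ᶠ[𝓝 x] fun y => A * exp (I * c * y) + B * exp (-(I * c * y))) :
    wronskian u (fun y => conj (u y)) x = 2 * I * c * (‖B‖ ^ 2 - ‖A‖ ^ 2) := by
  have hlin : HasDerivAt (fun y : ℝ => I * c * y) (I * c) x := by
    simpa using (hasDerivAt_id x).ofReal_comp.const_mul (I * c)
  have hneg : HasDerivAt (fun y : ℝ => -(I * c * y)) (-(I * c)) x := hlin.neg
  set P := exp (I * c * x)
  set Q := exp (-(I * c * x))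
  have hPQ : P * Q = 1 := by rw [← exp_add]; simp
  have hP : conj P = Q := by rw [← exp_conj]; congr 1; simp
  have hQ : conj Q = P := by rw [← exp_conj]; congr 1; simp
  have hu : u x = A * P + B * Q := h.eq_of_nhds
  have hu' : deriv u x = I * c * (A * P - B * Q) := by
    rw [h.deriv_eq]
    exact ((hlin.cexp.const_mul A).add (hneg.cexp.const_mul B)).deriv.trans (by ring)
  simp only [wronskian, deriv_conj, hu, hu', map_add, map_mul, map_sub, conj_I, conj_ofReal, hP,
    hQ]
  rw [← mul_conj', ← mul_conj']
  linear_combination 2 * I * c * (B * conj B - A * conj A) * hPQ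

theorem unitarity_minus_general
    (V : ℝ → ℝ) (xM : ℝ)
    (hVmeas : Measurable V) (hVbdd : ∃ C : ℝ, ∀ x : ℝ, |V x| ≤ C)
    (z : ℝ)
    (rp rm : ℝ)
    (u : ℝ → ℂ) (hu : IsSolution V (z : ℂ) u)
    (Tm Rm : ℂ)
    (huL : ∀ x : ℝ, x ≤ -xM → u x = Tm * Complex.exp (-(Complex.I * (rm : ℂ) * x)))
    (huR : ∀ x : ℝ, xM ≤ x →
      u x = Complex.exp (-(Complex.I * (rp : ℂ) * x)) + Rm * Complex.exp (Complex.I * (rp : ℂ) * x)) :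
    rm * ‖Tm‖ ^ 2 + rp * ‖Rm‖ ^ 2 = rp := by
  obtain ⟨C, hC⟩ := hVbdd
  have hV : LocallyIntegrable V :=
    (locallyIntegrable_const C).mono hVmeas.aestronglyMeasurable
      (ae_of_all _ fun x => by simpa using (hC x).trans (le_abs_self C))
  have hū : IsSolution V z fun x => conj (u x) := by simpa using isSolution_conj hu
  have hL : u =ᶠ[𝓝 (-(xM + 1))] fun y => 0 * exp (I * rm * y) + Tm * exp (-(I * rm * y)) := by
    filter_upwards [Iio_mem_nhds (by linarith : -(xM + 1) < -xM)] with y hy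
    simp [huL y hy.le]
  have hR : u =ᶠ[𝓝 (xM + 1)] fun y => Rm * exp (I * rp * y) + 1 * exp (-(I * rp * y)) := by
    filter_upwards [Ioi_mem_nhds (by linarith : xM < xM + 1)] with y hy
    rw [huR y hy.le, one_mul, add_comm]
  have hW := hu.wronskian_eq hū hV hC (-(xM + 1)) (xM + 1)
  rw [wronskian_conj_of_eventuallyEq hL, wronskian_conj_of_eventuallyEq hR] at hW
  have hI : (2 * I : ℂ) ≠ 0 := by simp
  have hcast : (rm * ‖Tm‖ ^ 2 + rp * ‖Rm‖ ^ 2 : ℂ) = rp := by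
    apply mul_left_cancel₀ hI
    simp only [norm_zero, norm_one, ofReal_zero, ofReal_one] at hW
    linear_combination hW
  exact_mod_cast hcast

theorem unitarity_minus
    (V : ℝ → ℝ) (Vp Vm xM : ℝ)
    (hVmeas : Measurable V) (hVbdd : ∃ C : ℝ, ∀ x : ℝ, |V x| ≤ C)
    (hxM : 0 < xM)
    (hVp : ∀ x : ℝ, xM < x → V x = Vp)
    (hVm : ∀ x : ℝ, x < -xM → V x = Vm)
    (z : ℝ) (hzp : Vp < z) (hzm : Vm < z)
    (rp rm : ℝ) (hrp : rp = Real.sqrt (z - Vp)) (hrm : rm = Real.sqrt (z - Vm))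
    (u : ℝ → ℂ) (hu : IsSolution V (z : ℂ) u)
    (Tm Rm : ℂ)
    (huL : ∀ x : ℝ, x ≤ -xM → u x = Tm * Complex.exp (-(Complex.I * (rm : ℂ) * x)))
    (huR : ∀ x : ℝ, xM ≤ x →
      u x = Complex.exp (-(Complex.I * (rp : ℂ) * x)) + Rm * Complex.exp (Complex.I * (rp : ℂ) * x)) :
    rm * ‖Tm‖ ^ 2 + rp * ‖Rm‖ ^ 2 = rp :=
  unitarity_minus_general V xM hVmeas hVbdd z rp rm u hu Tm Rm huL huR
end

section
/- Let V be a steplike potential with steps V₊, V₋ and threshold x_M, let z ∈ ℂ, and let r₊, r₋ ∈ ℂ satisfy r₊² = z − V₊, r₋² = z − V₋, and r₊ ≠ 0. Suppose u₁ and u₂ are solutions of −u'' + V u = z u, and there are constants T₁, R₁, T₂, R₂ ∈ ℂ with: u₁(x) = T₁ e^{−i r₋ x} for all x ≤ −x_M and u₁(x) = e^{−i r₊ x} + R₁ e^{i r₊ x} for all x ≥ x_M; u₂(x) = T₂ e^{−i r₋ x} for all x ≤ −x_M and u₂(x) = e^{i r₊ x} + R₂ e^{−i r₊ x} for all x ≥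 x_M. Then R₁ R₂ = 1 and T₂ = T₁ R₂. -/
open Complex MeasureTheory
open scoped Classical

/-!
A solution of the integrated equation that vanishes on a left half-line vanishes identically:
on a short interval `[c, c + δ]` beyond the zero set, integrating the equation twice bounds
the maximum `M` of `‖u‖` there by `(C + ‖z‖) δ² M`. Hence `T₂ u₁ - T₁ u₂`, which vanishes
for `x ≤ -x_M`, is identically zero. For `x ≥ x_M` it equals
`(T₂ - T₁ R₂) e^{-i r₊ x} + (T₂ R₁ - T₁) e^{i r₊ x}`, and `e^{± i r₊ x}` are independent
on a half-line when `r₊ ≠ 0`, so `T₂ = T₁ R₂` and `T₂ R₁ = T₁`. The same argument applied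
to `u₁` alone shows `T₁ ≠ 0`, whence `R₁ R₂ = 1`.
-/

open Set

theorem norm_integral_le_mul_of_forall_mem_Icc {E : Type*} [NormedAddCommGroup E]
    [NormedSpace ℝ E] {f : ℝ → E} {c δ B x : ℝ}
    (hx : x ∈ Icc c (c + δ)) (hf : ∀ t ∈ Icc c (c + δ), ‖f t‖ ≤ B) :
    ‖∫ t in c..x, f t‖ ≤ B * δ := by
  have hB : 0 ≤ B := (norm_nonneg _).trans (hf c ⟨le_rfl, hx.1.trans hx.2⟩)
  calc ‖∫ t in c..x, f t‖ ≤ B * |x - c| :=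
        intervalIntegral.norm_integral_le_of_norm_le_const fun t ht =>
          hf t (Ioc_subset_Icc_self.trans (Icc_subset_Icc_right hx.2) (uIoc_of_le hx.1 ▸ ht))
    _ ≤ B * δ := by
        gcongr
        rw [abs_of_nonneg (sub_nonneg.2 hx.1)]
        linarith [hx.2]

theorem eq_zero_of_forall_gt_mul_exp_add_mul_exp {k a b : ℂ} {x₀ : ℝ} (hk : k ≠ 0)
    (h : ∀ x : ℝ, x₀ < x → a * exp (-(k * x)) + b * exp (k * x) = 0) : a = 0 ∧ b = 0 := by
  set x₁ := x₀ + 1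
  have hderiv : HasDerivAt (fun x : ℝ => a * exp (-(k * x)) + b * exp (k * x))
      (k * (-(a * exp (-(k * x₁))) + b * exp (k * x₁))) x₁ := by
    have hlin := (hasDerivAt_id (x₁ : ℂ)).const_mul k
    exact ((hlin.fun_neg.cexp.const_mul a).add (hlin.cexp.const_mul b)).comp_ofReal.congr_deriv
      (by simp only [id]; ring)
  have hzero : k * (-(a * exp (-(k * x₁))) + b * exp (k * x₁)) = 0 := by
    rw [← hderiv.deriv, (Filter.eventuallyEq_of_mem (Ioi_mem_nhds (lt_add_one x₀)) h).deriv_eq,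
      deriv_const]
  have hsum := h x₁ (lt_add_one x₀)
  have hdiff := (mul_eq_zero.1 hzero).resolve_left hk
  constructor
  · have ha : a * exp (-(k * x₁)) = 0 := by linear_combination (hsum - hdiff) / 2
    simpa [exp_ne_zero] using ha
  · have hb : b * exp (k * x₁) = 0 := by linear_combination (hsum + hdiff) / 2
    simpa [exp_ne_zero] using hb

section

variable {V : ℝ → ℝ} {z : ℂ} {C : ℝ} {u u₁ u₂ : ℝ → ℂ}

theorem norm_ofReal_sub_le (hC : ∀ x, |V x| ≤ C) (z : ℂ) (t : ℝ) :
    ‖(V t : ℂ) - z‖ ≤ C + ‖z‖ :=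
  (norm_sub_le _ _).trans <| add_le_add_left (by simpa using hC t) _

theorem intervalIntegrable_ofReal_sub_mul (hV : Measurable V) (hC : ∀ x, |V x| ≤ C)
    (hu : Continuous u) (a b : ℝ) :
    IntervalIntegrable (fun t => ((V t : ℂ) - z) * u t) volume a b := by
  rw [intervalIntegrable_iff]
  exact ((hu.intervalIntegrable a b).def'.bdd_mul
    ((measurable_ofReal.comp hV).sub_const z).aestronglyMeasurable
    (ae_of_all _ (norm_ofReal_sub_le hC z)))

namespace IsSolution

theorem continuous (hu : IsSolution V z u) : Continuous u := hu.1.continuous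

theorem deriv_eq_deriv_add_integral (hV : Measurable V) (hC : ∀ x, |V x| ≤ C)
    (hu : IsSolution V z u) (x y : ℝ) :
    deriv u y = deriv u x + ∫ t in x..y, ((V t : ℂ) - z) * u t := by
  have hI := intervalIntegrable_ofReal_sub_mul (z := z) hV hC hu.continuous
  rw [hu.2.2 x, hu.2.2 y, add_assoc,
    intervalIntegral.integral_add_adjacent_intervals (hI 0 x) (hI x y)]

theorem const_mul (hu : IsSolution V z u) (a : ℂ) : IsSolution V z (fun x => a * u x) := by
  obtain ⟨hd, hc, hi⟩ := hu
  have hder : deriv (fun x => a * u x) = fun x => a * deriv u x :=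
    funext fun x => deriv_const_mul a (hd x)
  refine ⟨hd.const_mul a, hder ▸ continuous_const.mul hc, fun x => ?_⟩
  simp only [hder, hi x, mul_left_comm _ a, intervalIntegral.integral_const_mul]
  ring

theorem sub (hV : Measurable V) (hC : ∀ x, |V x| ≤ C) (hu₁ : IsSolution V z u₁)
    (hu₂ : IsSolution V z u₂) : IsSolution V z (u₁ - u₂) := by
  have hder : deriv (u₁ - u₂) = deriv u₁ - deriv u₂ :=
    funext fun x => deriv_sub (hu₁.1 x) (hu₂.1 x)
  refine ⟨hu₁.1.sub hu₂.1, hder ▸ hu₁.2.1.sub hu₂.2.1, fun x => ?_⟩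
  simp only [hder, Pi.sub_apply, hu₁.2.2 x, hu₂.2.2 x, mul_sub]
  rw [intervalIntegral.integral_sub (intervalIntegrable_ofReal_sub_mul hV hC hu₁.continuous 0 x)
    (intervalIntegrable_ofReal_sub_mul hV hC hu₂.continuous 0 x)]
  ring

theorem deriv_eqOn_zero_of_eqOn_Iic (hu : IsSolution V z u) {c : ℝ} (h : EqOn u 0 (Iic c)) :
    EqOn (deriv u) 0 (Iic c) := by
  have hopen : EqOn (deriv u) 0 (Iio c) := fun x hx =>
    (Filter.eventuallyEq_of_mem (Iio_mem_nhds hx) fun y hy => h (le_of_lt hy)).deriv_eq.trans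
      (deriv_const x 0)
  simpa only [closure_Iio] using hopen.closure hu.2.1 continuous_const

theorem eqOn_zero_Iic_add (hV : Measurable V) (hC : ∀ x, |V x| ≤ C) (hu : IsSolution V z u)
    {c δ : ℝ} (hδ : 0 ≤ δ) (hKδ : (C + ‖z‖) * δ ^ 2 < 1) (h : EqOn u 0 (Iic c)) :
    EqOn u 0 (Iic (c + δ)) := by
  set K := C + ‖z‖
  obtain ⟨x₀, hx₀, hmax⟩ := isCompact_Icc.exists_isMaxOn
    (nonempty_Icc.2 (le_add_of_nonneg_right hδ)) hu.continuous.norm.continuousOn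
  set M := ‖u x₀‖
  have hderiv : ∀ x ∈ Icc c (c + δ), ‖deriv u x‖ ≤ K * M * δ := by
    intro x hx
    rw [hu.deriv_eq_deriv_add_integral hV hC c x, hu.deriv_eqOn_zero_of_eqOn_Iic h self_mem_Iic,
      Pi.zero_apply, zero_add]
    refine norm_integral_le_mul_of_forall_mem_Icc hx fun t ht => ?_
    rw [norm_mul]
    exact mul_le_mul (norm_ofReal_sub_le hC z t) (hmax ht) (norm_nonneg _)
      ((norm_nonneg _).trans (norm_ofReal_sub_le hC z t))
  have hval : ∀ x ∈ Icc c (c + δ), ‖u x‖ ≤ K * M * δ * δ := by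
    intro x hx
    have hftc : ∫ t in c..x, deriv u t = u x := by
      rw [intervalIntegral.integral_deriv_eq_sub (fun t _ => hu.1 t)
          (hu.2.1.intervalIntegrable c x),
        h self_mem_Iic, Pi.zero_apply, sub_zero]
    exact hftc ▸ norm_integral_le_mul_of_forall_mem_Icc hx hderiv
  have hM : M = 0 := by nlinarith [hval x₀ hx₀, norm_nonneg (u x₀), sq_nonneg δ]
  intro x hx
  rcases le_total x c with hxc | hxc
  · exact h hxc
  · exact norm_le_zero_iff.1 (hM ▸ hmax ⟨hxc, hx⟩)

theorem eq_zero_of_eqOn_Iic (hV : Measurable V) (hC : ∀ x, |V x| ≤ C) (hu : IsSolution V z u)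
    {c : ℝ} (h : EqOn u 0 (Iic c)) : u = 0 := by
  set K := C + ‖z‖
  have hK : 0 ≤ K := (norm_nonneg _).trans (norm_ofReal_sub_le hC z 0)
  obtain ⟨δ, hδ, hKδ⟩ : ∃ δ > 0, K * δ ^ 2 < 1 := by
    refine ⟨(K + 1)⁻¹, by positivity, ?_⟩
    rw [inv_pow, ← div_eq_mul_inv, div_lt_one (by positivity)]
    nlinarith
  have hstep : ∀ n : ℕ, EqOn u 0 (Iic (c + n * δ)) := by
    intro n
    induction n with
    | zero => simpa using h
    | succ n ih => simpa [add_mul, add_assoc] using hu.eqOn_zero_Iic_add hV hC hδ.le hKδ ih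
  funext x
  obtain ⟨n, hn⟩ := exists_nat_ge ((x - c) / δ)
  exact hstep n (by rw [div_le_iff₀ hδ] at hn; simp only [mem_Iic]; linarith)

end IsSolution

end

theorem reflection_product_relation_general
    (V : ℝ → ℝ) (xM : ℝ)
    (hVmeas : Measurable V) (hVbdd : ∃ C : ℝ, ∀ x : ℝ, |V x| ≤ C)
    (z rp rm : ℂ)
    (hrp0 : rp ≠ 0)
    (u₁ u₂ : ℝ → ℂ) (hu₁ : IsSolution V z u₁) (hu₂ : IsSolution V z u₂)
    (T₁ R₁ T₂ R₂ : ℂ)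
    (hu₁L : ∀ x : ℝ, x ≤ -xM → u₁ x = T₁ * Complex.exp (-(Complex.I * rm * x)))
    (hu₁R : ∀ x : ℝ, xM ≤ x →
      u₁ x = Complex.exp (-(Complex.I * rp * x)) + R₁ * Complex.exp (Complex.I * rp * x))
    (hu₂L : ∀ x : ℝ, x ≤ -xM → u₂ x = T₂ * Complex.exp (-(Complex.I * rm * x)))
    (hu₂R : ∀ x : ℝ, xM ≤ x →
      u₂ x = Complex.exp (Complex.I * rp * x) + R₂ * Complex.exp (-(Complex.I * rp * x))) :
    R₁ * R₂ = 1 ∧ T₂ = T₁ * R₂ := by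
  obtain ⟨C, hC⟩ := hVbdd
  have hk : I * rp ≠ 0 := mul_ne_zero I_ne_zero hrp0
  have hT₁ : T₁ ≠ 0 := by
    rintro rfl
    have hu₁0 := hu₁.eq_zero_of_eqOn_Iic hVmeas hC (c := -xM) fun x hx => by simp [hu₁L x hx]
    refine one_ne_zero (eq_zero_of_forall_gt_mul_exp_add_mul_exp (b := R₁) hk (x₀ := xM)
      fun x hx => ?_).1
    simpa [hu₁0] using (hu₁R x hx.le).symm
  have hw := ((hu₁.const_mul T₂).sub hVmeas hC (hu₂.const_mul T₁)).eq_zero_of_eqOn_Iic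
    hVmeas hC (c := -xM) fun x hx => by simp [hu₁L x hx, hu₂L x hx]; ring
  obtain ⟨h₁, h₂⟩ := eq_zero_of_forall_gt_mul_exp_add_mul_exp (a := T₂ - T₁ * R₂)
    (b := T₂ * R₁ - T₁) hk (x₀ := xM) fun x hx => by
      have := congrFun hw x
      simp only [Pi.sub_apply, Pi.zero_apply, hu₁R x hx.le, hu₂R x hx.le] at this
      linear_combination this
  exact ⟨mul_left_cancel₀ hT₁ (by linear_combination h₂ - R₁ * h₁), by linear_combination h₁⟩

theorem reflection_product_relation
    (V : ℝ → ℝ) (Vp Vm xM : ℝ)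
    (hVmeas : Measurable V) (hVbdd : ∃ C : ℝ, ∀ x : ℝ, |V x| ≤ C)
    (hxM : 0 < xM)
    (hVp : ∀ x : ℝ, xM < x → V x = Vp)
    (hVm : ∀ x : ℝ, x < -xM → V x = Vm)
    (z rp rm : ℂ) (hrp : rp ^ 2 = z - (Vp : ℂ)) (hrm : rm ^ 2 = z - (Vm : ℂ))
    (hrp0 : rp ≠ 0)
    (u₁ u₂ : ℝ → ℂ) (hu₁ : IsSolution V z u₁) (hu₂ : IsSolution V z u₂)
    (T₁ R₁ T₂ R₂ : ℂ)
    (hu₁L : ∀ x : ℝ, x ≤ -xM → u₁ x = T₁ * Complex.exp (-(Complex.I * rm * x)))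
    (hu₁R : ∀ x : ℝ, xM ≤ x →
      u₁ x = Complex.exp (-(Complex.I * rp * x)) + R₁ * Complex.exp (Complex.I * rp * x))
    (hu₂L : ∀ x : ℝ, x ≤ -xM → u₂ x = T₂ * Complex.exp (-(Complex.I * rm * x)))
    (hu₂R : ∀ x : ℝ, xM ≤ x →
      u₂ x = Complex.exp (Complex.I * rp * x) + R₂ * Complex.exp (-(Complex.I * rp * x))) :
    R₁ * R₂ = 1 ∧ T₂ = T₁ * R₂ :=
  reflection_product_relation_general V xM hVmeas hVbdd z rp rm hrp0 u₁ u₂ hu₁ hu₂ T₁ R₁ T₂ R₂ hu₁L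
    hu₁R hu₂L hu₂R
end
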